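/- arXiv:1808.07092 — 2 statements merged into one kernel-verified Lean document; each statement's English description precedes it below -/
import Mathlib

section
/- Let H be an N×N Hermitian complex matrix, fix an index i in {1,...,N}, and let H^(1i) be the matrix obtained from H by setting the (1,i) and (i,1) entries to 0. Let z have Im z > 0, and let G = (H - zI)^{-1} and G^(1i) = (H^(1i) - zI)^{-1}. Let epsilon, delta > 0 satisfy 2 * N^{epsilon/3 + delta} * N^{epsilon - 1/2} <= 1/2. If |H_{1i}| <= N^{epsilon - 1/2} and max over k,l of |G_kl| <= N^{epsilon/3 + delta}, then max over k,l of |G^(1i)_kl| <= 2 * N^{epsilon/3 + delta}. -/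
open MeasureTheory ProbabilityTheory Complex

/-- The resolventM `(H - z)⁻¹` of a matrix `H`. -/
noncomputable def resolventM {N : ℕ} (H : Matrix (Fin N) (Fin N) ℂ) (z : ℂ) :
    Matrix (Fin N) (Fin N) ℂ :=
  (H - z • (1 : Matrix (Fin N) (Fin N) ℂ))⁻¹

/-- Stochastic domination of families of (nonnegative) random variables. -/
def StochDom {Ω : ℕ → Type*} [∀ N, MeasureSpace (Ω N)] {U : ℕ → Type*}
    (X Y : ∀ N : ℕ, U N → Ω N → ℝ) : Prop :=
  ∀ ε : ℝ, 0 < ε → ∀ D : ℝ, 0 < D → ∃ N₀ : ℕ, ∀ N : ℕ, N₀ ≤ N → ∀ u : U N,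
    (ℙ : Measure (Ω N)) {ω | (N : ℝ) ^ ε * Y N u ω < X N u ω} ≤
      ENNReal.ofReal ((N : ℝ) ^ (-D))

/-- The Stieltjes transform of the semicircle law. -/
noncomputable def mSC (z : ℂ) : ℂ :=
  ∫ x : ℝ, (((2 * Real.pi)⁻¹ * Real.sqrt (max (4 - x ^ 2) 0) : ℝ) : ℂ) / ((x : ℂ) - z)

/-- The control parameter `F_z(r)`. -/
noncomputable def Fz (z : ℂ) (r : ℝ) : ℝ :=
  min ((1 + 1 / Real.sqrt ‖z ^ 2 - 4‖) * r) (Real.sqrt r)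

/-- The spectral domain `S_N(γ)`. -/
def specDomain (N : ℕ) (γ : ℝ) : Set ℂ :=
  {z | -(N : ℝ) ≤ z.re ∧ z.re ≤ N ∧ (N : ℝ) ^ (-1 + γ) ≤ z.im ∧ z.im ≤ N}

/-- A family of Wigner matrices. -/
structure IsWigner {Ω : ℕ → Type*} [∀ N, MeasureSpace (Ω N)]
    (H : ∀ N : ℕ, Ω N → Matrix (Fin N) (Fin N) ℂ) : Prop where
  prob : ∀ N, IsProbabilityMeasure (ℙ : Measure (Ω N))
  meas : ∀ N (i j : Fin N), Measurable fun ω => H N ω i j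
  herm : ∀ N ω, (H N ω).IsHermitian
  indep : ∀ N, iIndepFun
    (fun (p : {p : Fin N × Fin N // p.1 ≤ p.2}) ω => H N ω p.1.1 p.1.2) ℙ
  mean_zero : ∀ N (i j : Fin N), ∫ ω, H N ω i j = 0
  var_off : ∀ N (i j : Fin N), i ≠ j → ∫ ω, ‖H N ω i j‖ ^ 2 = 1 / (N : ℝ)
  var_diag : ∃ C : ℝ, ∀ N (i : Fin N), ∫ ω, ‖H N ω i i‖ ^ 2 ≤ C / (N : ℝ)
  moments : ∀ p : ℕ, ∃ Cp : ℝ, ∀ N (i j : Fin N),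
    ∫ ω, (Real.sqrt N * ‖H N ω i j‖) ^ p ≤ Cp ^ p

open Matrix ComplexOrder in
/-- A Hermitian matrix minus a non-real scalar is invertible. -/
lemma herm_sub_smul_det_isUnit {N : ℕ} {H : Matrix (Fin N) (Fin N) ℂ}
    (hH : H.IsHermitian) {z : ℂ} (hz : z.im ≠ 0) :
    IsUnit (H - z • (1 : Matrix (Fin N) (Fin N) ℂ)).det := by
  rw [isUnit_iff_ne_zero]
  intro hdet
  obtain ⟨v, hv, hmul⟩ := (Matrix.exists_mulVec_eq_zero_iff).mpr hdet
  have h1 : H *ᵥ v = z • v := by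
    rw [Matrix.sub_mulVec, sub_eq_zero] at hmul
    simpa [Matrix.smul_mulVec, Matrix.one_mulVec] using hmul
  set d : ℂ := star v ⬝ᵥ v with hd
  have hdne : d ≠ 0 := fun h => hv (dotProduct_star_self_eq_zero.mp h)
  have hdstar : star d = d := (Matrix.star_dotProduct v v).symm
  set c : ℂ := star v ⬝ᵥ (H *ᵥ v) with hc
  have hczd : c = z * d := by
    rw [hc, h1, dotProduct_smul, smul_eq_mul]
  have hcstar : star c = c := by
    have e1 : star c = star (H *ᵥ v) ⬝ᵥ v := by
      rw [hc, Matrix.star_dotProduct, star_star]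
    rw [e1, Matrix.star_mulVec, hH.eq, hc, Matrix.dotProduct_mulVec]
  have hzd : z * d = star z * d := by
    rw [← hczd, ← hcstar, hczd, star_mul', hdstar]
  have hzz : z = star z := mul_right_cancel₀ hdne hzd
  apply hz
  have := congrArg Complex.im hzz
  simp at this
  linarith

lemma mul_std_mul_apply {n : Type*} [Fintype n] [DecidableEq n]
    (A B : Matrix n n ℂ) (a b : n) (c : ℂ) (k l : n) :
    (A * Matrix.single a b c * B) k l = A k a * c * B b l := by
  rw [Matrix.mul_apply, Finset.sum_eq_single b]
  · simp
  · intro q _ hq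
    rw [Matrix.mul_single_apply_of_ne _ _ _ _ _ hq, zero_mul]
  · simp

/-- bound on the resolvent of the matrix with the `(1,i)` and
`(i,1)` entries set to zero. -/
theorem resolvent_zeroed_entry_bound {N : ℕ} (hN : 0 < N)
    (H H1i : Matrix (Fin N) (Fin N) ℂ) (hH : H.IsHermitian) (i : Fin N)
    (hdef : ∀ k l : Fin N, H1i k l =
      if (k = ⟨0, hN⟩ ∧ l = i) ∨ (k = i ∧ l = ⟨0, hN⟩) then 0 else H k l)
    (z : ℂ) (hz : 0 < z.im) (ε δ : ℝ) (hε : 0 < ε) (hδ : 0 < δ)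
    (hsmall : 2 * (N : ℝ) ^ (ε / 3 + δ) * (N : ℝ) ^ (ε - 1 / 2) ≤ 1 / 2)
    (hH1 : ‖H ⟨0, hN⟩ i‖ ≤ (N : ℝ) ^ (ε - 1 / 2))
    (hG : ∀ k l : Fin N, ‖resolventM H z k l‖ ≤ (N : ℝ) ^ (ε / 3 + δ)) :
    ∀ k l : Fin N, ‖resolventM H1i z k l‖ ≤ 2 * (N : ℝ) ^ (ε / 3 + δ) := by
  have hNR : (0 : ℝ) < N := Nat.cast_pos.mpr hN
  set M : ℝ := (N : ℝ) ^ (ε / 3 + δ) with hM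
  set h : ℝ := (N : ℝ) ^ (ε - 1 / 2) with hh
  have hMpos : 0 < M := Real.rpow_pos_of_pos hNR _
  have hhpos : 0 < h := Real.rpow_pos_of_pos hNR _
  set z0 : Fin N := ⟨0, hN⟩ with hz0
  set A : Matrix (Fin N) (Fin N) ℂ := H - z • 1 with hA
  set B : Matrix (Fin N) (Fin N) ℂ := H1i - z • 1 with hB
  by_cases hBu : IsUnit B.det
  swap
  · intro k l
    rw [resolventM, ← hB, Matrix.nonsing_inv_apply_not_isUnit _ hBu]
    simp only [Matrix.zero_apply, norm_zero]
    positivity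
  have hAu : IsUnit A.det := herm_sub_smul_det_isUnit hH hz.ne'
  set D : Matrix (Fin N) (Fin N) ℂ := H - H1i with hD
  have hres : B⁻¹ = A⁻¹ + A⁻¹ * D * B⁻¹ := by
    have h1 : A⁻¹ * A = 1 := Matrix.nonsing_inv_mul A hAu
    have h2 : B * B⁻¹ = 1 := Matrix.mul_nonsing_inv B hBu
    have hBD : B + D = A := by rw [hA, hB, hD]; abel
    calc B⁻¹ = (A⁻¹ * A) * B⁻¹ := by rw [h1, one_mul]
      _ = A⁻¹ * ((B + D) * B⁻¹) := by rw [hBD, Matrix.mul_assoc]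
      _ = A⁻¹ * (1 + D * B⁻¹) := by rw [add_mul, h2]
      _ = A⁻¹ + A⁻¹ * D * B⁻¹ := by rw [mul_add, mul_one, Matrix.mul_assoc]
  have hHi0 : ‖H i z0‖ ≤ h := by
    rw [← hH.apply i z0, RCLike.star_def, Complex.norm_conj]
    exact hH1
  have hGA : ∀ k l : Fin N, ‖A⁻¹ k l‖ ≤ M := by
    intro k l
    have := hG k l
    rwa [resolventM, ← hA] at this
  have : Nonempty (Fin N) := ⟨z0⟩
  obtain ⟨p, hp⟩ := Finite.exists_max (fun p : Fin N × Fin N => ‖B⁻¹ p.1 p.2‖)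
  set M' : ℝ := ‖B⁻¹ p.1 p.2‖ with hM'
  have hM'nn : 0 ≤ M' := norm_nonneg _
  have habs3 : ∀ (a b : Fin N) (c : ℂ), ‖c‖ ≤ h → ∀ k l : Fin N,
      ‖(A⁻¹ * Matrix.single a b c * B⁻¹) k l‖ ≤ M * h * M' := by
    intro a b c hc k l
    rw [mul_std_mul_apply, norm_mul, norm_mul]
    have h1 := hGA k a
    have h2 : ‖B⁻¹ b l‖ ≤ M' := hp (b, l)
    gcongr
  have hDab : ∀ a b : Fin N,
      D a b = if (a = z0 ∧ b = i) ∨ (a = i ∧ b = z0) then H a b else 0 := by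
    intro a b
    rw [hD, Matrix.sub_apply, hdef a b]
    split_ifs <;> simp
  have hDcomp : ∀ k l : Fin N, ‖(A⁻¹ * D * B⁻¹) k l‖ ≤ M' / 2 := by
    intro k l
    by_cases hi : i = z0
    · have hDeq : D = Matrix.single z0 z0 (H z0 z0) := by
        ext a b
        rw [hDab a b, hi, Matrix.single, Matrix.of_apply]
        by_cases hab : a = z0 ∧ b = z0
        · obtain ⟨rfl, rfl⟩ := hab
          simp
        · have h2 : ¬(z0 = a ∧ z0 = b) := fun ⟨x, y⟩ => hab ⟨x.symm, y.symm⟩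
          simp [hab, h2]
      have hc : ‖H z0 z0‖ ≤ h := hi ▸ hH1
      have := habs3 z0 z0 (H z0 z0) hc k l
      rw [hDeq]
      refine this.trans ?_
      nlinarith
    · have hi' : z0 ≠ i := fun hE => hi hE.symm
      have hDeq : D = Matrix.single z0 i (H z0 i)
          + Matrix.single i z0 (H i z0) := by
        ext a b
        rw [hDab a b, Matrix.add_apply, Matrix.single, Matrix.single,
          Matrix.of_apply, Matrix.of_apply]
        by_cases h1 : a = z0 ∧ b = i
        · obtain ⟨rfl, rfl⟩ := h1
          simp [hi, hi']
        · by_cases h2 : a = i ∧ b = z0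
          · obtain ⟨rfl, rfl⟩ := h2
            simp [hi, hi']
          · have h1' : ¬(z0 = a ∧ i = b) := fun ⟨x, y⟩ => h1 ⟨x.symm, y.symm⟩
            have h2' : ¬(i = a ∧ z0 = b) := fun ⟨x, y⟩ => h2 ⟨x.symm, y.symm⟩
            simp [h1, h2, h1', h2']
      have hsplit : A⁻¹ * D * B⁻¹ =
          A⁻¹ * Matrix.single z0 i (H z0 i) * B⁻¹
          + A⁻¹ * Matrix.single i z0 (H i z0) * B⁻¹ := by
        rw [hDeq, mul_add, add_mul]
      rw [hsplit, Matrix.add_apply]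
      have h1 := habs3 z0 i (H z0 i) hH1 k l
      have h2 := habs3 i z0 (H i z0) hHi0 k l
      calc ‖_‖ ≤ _ + _ := norm_add_le _ _
        _ ≤ M * h * M' + M * h * M' := add_le_add h1 h2
        _ = (2 * M * h) * M' := by ring
        _ ≤ (1 / 2) * M' := mul_le_mul_of_nonneg_right hsmall hM'nn
        _ = M' / 2 := by ring
  have hkey : M' ≤ 2 * M := by
    have e : B⁻¹ p.1 p.2 = A⁻¹ p.1 p.2 + (A⁻¹ * D * B⁻¹) p.1 p.2 := by
      conv_lhs => rw [hres]
      rw [Matrix.add_apply]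
    have hb : M' ≤ M + M' / 2 :=
      calc M' = ‖A⁻¹ p.1 p.2 + (A⁻¹ * D * B⁻¹) p.1 p.2‖ := by rw [hM', e]
        _ ≤ _ + _ := norm_add_le _ _
        _ ≤ M + M' / 2 := add_le_add (hGA p.1 p.2) (hDcomp p.1 p.2)
    linarith
  intro k l
  have h1 : ‖resolventM H1i z k l‖ ≤ M' := by
    rw [resolventM, ← hB]; exact hp (k, l)
  linarith
end

section
/- For every z in the open upper half-plane, the Stieltjes transform m(z) of the semicircle law satisfies the quadratic equation m(z)^2 + z*m(z) + 1 = 0; equivalently, z + m(z) = -1/m(z). -/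
open MeasureTheory ProbabilityTheory Complex

private lemma circleIntegral_add' {f g : ℂ → ℂ} {c : ℂ} {R : ℝ}
    (hf : CircleIntegrable f c R) (hg : CircleIntegrable g c R) :
    (∮ w in C(c, R), (f w + g w)) = (∮ w in C(c, R), f w) + ∮ w in C(c, R), g w := by
  simp only [circleIntegral, smul_add, intervalIntegral.integral_add hf.out hg.out]

private lemma exists_root_semicircle (z : ℂ) (hz : 0 < z.im) :
    ∃ a : ℂ, a ^ 2 - z * a + 1 = 0 ∧ ‖a‖ < 1 := by
  obtain ⟨s, hs⟩ := IsAlgClosed.exists_pow_nat_eq (k := ℂ) (z ^ 2 - 4) zero_lt_two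
  set a₁ := (z + s) / 2 with ha₁
  set a₂ := (z - s) / 2 with ha₂
  have h₁ : a₁ ^ 2 - z * a₁ + 1 = 0 := by rw [ha₁]; linear_combination hs / 4
  have h₂ : a₂ ^ 2 - z * a₂ + 1 = 0 := by rw [ha₂]; linear_combination hs / 4
  have hprod : a₁ * a₂ = 1 := by rw [ha₁, ha₂]; linear_combination -hs / 4
  by_cases hc₁ : ‖a₁‖ < 1
  · exact ⟨a₁, h₁, hc₁⟩
  by_cases hc₂ : ‖a₂‖ < 1
  · exact ⟨a₂, h₂, hc₂⟩
  exfalso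
  push_neg at hc₁ hc₂
  have habs : ‖a₁‖ * ‖a₂‖ = 1 := by
    rw [← norm_mul, hprod, norm_one]
  have e₁ : ‖a₁‖ = 1 := by nlinarith
  have e₂ : a₂ = a₁⁻¹ := eq_inv_of_mul_eq_one_right (by linear_combination hprod)
  have e₃ : a₁⁻¹ = (starRingEnd ℂ) a₁ := Complex.inv_eq_conj e₁
  have hsum : z = a₁ + a₂ := by rw [ha₁, ha₂]; ring
  rw [e₂, e₃] at hsum
  have : z.im = 0 := by rw [hsum]; simp
  linarith

private lemma mSC_eq_neg_root (z a : ℂ) (hz : 0 < z.im) (ha : a ^ 2 - z * a + 1 = 0)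
    (haa : ‖a‖ < 1) : mSC z = -a := by
  have himz : z.im ≠ 0 := ne_of_gt hz
  set b := z - a with hb
  have hab : a * b = 1 := by rw [hb]; linear_combination -ha
  have ha0 : a ≠ 0 := by intro h; rw [h, zero_mul] at hab; exact zero_ne_one hab
  have haabs : 0 < ‖a‖ := norm_pos_iff.mpr ha0
  have habs : ‖a‖ * ‖b‖ = 1 := by rw [← norm_mul, hab, norm_one]
  have hb1 : 1 < ‖b‖ := by nlinarith
  -- the integrand of mSC
  set F : ℝ → ℂ := fun x =>
    (((2 * Real.pi)⁻¹ * Real.sqrt (max (4 - x ^ 2) 0) : ℝ) : ℂ) / ((x : ℂ) - z) with hF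
  have hFden : ∀ x : ℝ, (x : ℂ) - z ≠ 0 := by
    intro x h
    apply himz
    have := congrArg Complex.im h
    simpa using this
  have hFcont : Continuous F := by
    apply Continuous.div
    · exact Complex.continuous_ofReal.comp
        (continuous_const.mul (Real.continuous_sqrt.comp
          ((continuous_const.sub (continuous_pow 2)).max continuous_const)))
    · exact Complex.continuous_ofReal.sub continuous_const
    · exact hFden
  -- Step 1: restrict to [-2, 2]
  have step1 : mSC z = ∫ x in (-2 : ℝ)..2, F x := by
    have hsupp : Function.support F ⊆ Set.Ioc (-2 : ℝ) 2 := by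
      intro x hx
      by_contra hxn
      apply hx
      have h4 : 4 - x ^ 2 ≤ 0 := by
        simp only [Set.mem_Ioc, not_and_or, not_lt, not_le] at hxn
        rcases hxn with h | h <;> nlinarith
      simp [hF, max_eq_right h4]
    rw [intervalIntegral.integral_of_le (by norm_num : (-2 : ℝ) ≤ 2),
      ← MeasureTheory.integral_indicator measurableSet_Ioc,
      Set.indicator_eq_self.mpr hsupp]
    rfl
  -- the angular integrand
  set G : ℝ → ℂ := fun θ =>
    ((Real.sin θ : ℂ)) ^ 2 / (2 * (Real.cos θ : ℂ) - z) with hG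
  have hGden : ∀ θ : ℝ, 2 * (Real.cos θ : ℂ) - z ≠ 0 := by
    intro θ h
    apply himz
    have := congrArg Complex.im h
    simpa using this
  have hGcont : Continuous G := by
    apply Continuous.div
    · exact (Complex.continuous_ofReal.comp Real.continuous_sin).pow 2
    · exact (continuous_const.mul (Complex.continuous_ofReal.comp Real.continuous_cos)).sub
        continuous_const
    · exact hGden
  -- Step 2: substitution x = 2 cos θ
  have step2 : (∫ x in (-2 : ℝ)..2, F x) = ∫ θ in (0 : ℝ)..Real.pi, (2 / Real.pi : ℝ) • G θ := by
    have hder : ∀ θ ∈ Set.uIcc (0 : ℝ) Real.pi,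
        HasDerivAt (fun t => 2 * Real.cos t) (2 * (-Real.sin θ)) θ := fun θ _ =>
      (Real.hasDerivAt_cos θ).const_mul 2
    have hsub := intervalIntegral.integral_comp_smul_deriv hder
      (continuous_const.mul Real.continuous_sin.neg).continuousOn hFcont
    simp only [Real.cos_zero, mul_one, Real.cos_pi, mul_neg_one] at hsub
    rw [show (∫ x in (-2 : ℝ)..2, F x) = -∫ x in (2 : ℝ)..(-2 : ℝ), F x from
      intervalIntegral.integral_symm 2 (-2), ← hsub, ← intervalIntegral.integral_neg]
    apply intervalIntegral.integral_congr
    intro θ hθ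
    rw [Set.uIcc_of_le Real.pi_pos.le] at hθ
    have hsin : 0 ≤ Real.sin θ := Real.sin_nonneg_of_nonneg_of_le_pi hθ.1 hθ.2
    have hmax : max (4 - (2 * Real.cos θ) ^ 2) 0 = (2 * Real.sin θ) ^ 2 := by
      rw [max_eq_left (by nlinarith [Real.sin_sq_add_cos_sq θ])]
      nlinarith [Real.sin_sq_add_cos_sq θ]
    have hd := hGden θ
    have hπ : (Real.pi : ℂ) ≠ 0 := by exact_mod_cast Real.pi_ne_zero
    simp only [Function.comp_apply, hF, hG, hmax,
      Real.sqrt_sq (by positivity : (0:ℝ) ≤ 2 * Real.sin θ), Complex.real_smul]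
    push_cast at hd ⊢
    field_simp [hd, hπ]
  -- Step 3: reflection to [π, 2π]
  have step3 : (∫ θ in Real.pi..(2 * Real.pi), G θ) = ∫ θ in (0 : ℝ)..Real.pi, G θ := by
    have := intervalIntegral.integral_comp_sub_left (a := (0 : ℝ)) (b := Real.pi)
      (f := G) (2 * Real.pi)
    rw [sub_zero, (by ring : 2 * Real.pi - Real.pi = Real.pi)] at this
    rw [← this]
    apply intervalIntegral.integral_congr
    intro θ _
    have hs : Real.sin (2 * Real.pi - θ) = -Real.sin θ := by
      simp [Real.sin_sub]
    have hc : Real.cos (2 * Real.pi - θ) = Real.cos θ := by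
      simp [Real.cos_sub]
    simp only [hG, hs, hc]
    push_cast
    ring
  -- Step 4: full angular integral
  have hGint : ∀ u v : ℝ, IntervalIntegrable G volume u v := fun u v =>
    hGcont.intervalIntegrable u v
  have step4 : (∫ θ in (0 : ℝ)..(2 * Real.pi), G θ) = 2 * ∫ θ in (0 : ℝ)..Real.pi, G θ := by
    rw [← intervalIntegral.integral_add_adjacent_intervals (hGint 0 Real.pi)
      (hGint Real.pi (2 * Real.pi)), step3]
    ring
  -- the circle integrand
  set g : ℂ → ℂ := fun w =>
    I / 4 * (1 + z * w⁻¹ + (w ^ 2)⁻¹ + (a - b) * (w - a)⁻¹ + (b - a) * (w - b)⁻¹) with hg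
  -- Step 5: angular integral as circle integral
  have step5 : (∫ θ in (0 : ℝ)..(2 * Real.pi), G θ) = ∮ w in C((0 : ℂ), 1), g w := by
    rw [circleIntegral]
    apply intervalIntegral.integral_congr
    intro θ _
    simp only [deriv_circleMap, circleMap_zero, Complex.ofReal_one, one_mul]
    set w : ℂ := Complex.exp (θ * I) with hw
    have habsw : ‖w‖ = 1 := by
      rw [hw]; exact Complex.norm_exp_ofReal_mul_I θ
    have hw0 : w ≠ 0 := Complex.exp_ne_zero _
    have hwa : w - a ≠ 0 := sub_ne_zero.2 (by intro h; rw [← h, habsw] at haa; exact lt_irrefl _ haa)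
    have hwb : w - b ≠ 0 := sub_ne_zero.2 (by intro h; rw [← h, habsw] at hb1; exact lt_irrefl _ hb1)
    have hcos : ((Real.cos θ : ℂ)) = (w + w⁻¹) / 2 := by
      rw [Complex.ofReal_cos, Complex.cos, hw, ← Complex.exp_neg, neg_mul]
    have hsinsq : ((Real.sin θ : ℂ)) ^ 2 = 1 - ((Real.cos θ : ℂ)) ^ 2 := by
      have := Real.sin_sq θ
      push_cast [← this]
      norm_cast
    have hfac : (w + w⁻¹ - z) * w = (w - a) * (w - b) := by
      field_simp
      linear_combination w * hb - hab
    have hq : w + w⁻¹ - z ≠ 0 := by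
      intro h
      rw [h, zero_mul] at hfac
      rcases mul_eq_zero.1 hfac.symm with h' | h'
      · exact hwa h'
      · exact hwb h'
    rw [smul_eq_mul, hG]
    simp only [hsinsq, hcos, hg]
    have h2 : 2 * ((w + w⁻¹) / 2) - z = w + w⁻¹ - z := by ring
    rw [h2]
    have hwb' : w - (z - a) ≠ 0 := by rw [← hb]; exact hwb
    rw [hb]
    field_simp [hw0, hwa, hwb', hq]
    have h3 : (w + w⁻¹ - z) * w = w * w + 1 - w * z := by
      rw [sub_mul, add_mul, inv_mul_cancel₀ hw0]; ring
    rw [div_eq_iff (by rw [pow_two]; exact h3 ▸ mul_ne_zero hq hw0)]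
    linear_combination (4 * (((w * (w + z) + 1) * (w - a) + w ^ 2 * (a - (z - a))) * (w - (z - a)) + w ^ 2 * (w - a) * (z - a - a)) - 4 * ((w - a) * (w - (z - a))) * (-3 * w ^ 2 + z * w + 1)) * ha -
      4 * (((w * (w + z) + 1) * (w - a) + w ^ 2 * (a - (z - a))) * (w - (z - a)) + w ^ 2 * (w - a) * (z - a - a)) * (w ^ 2 + 1 - w * z) * Complex.I_sq
  -- Step 6: evaluate the circle integral
  have hs0 : ∀ w ∈ Metric.sphere (0 : ℂ) 1, w ≠ 0 := by
    intro w hw h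
    rw [h] at hw
    simp at hw
  have hsa : ∀ w ∈ Metric.sphere (0 : ℂ) 1, w - a ≠ 0 := by
    intro w hw
    rw [mem_sphere_zero_iff_norm] at hw
    refine sub_ne_zero.2 fun h => ?_
    rw [← h, hw] at haa
    exact lt_irrefl _ haa
  have hsb : ∀ w ∈ Metric.sphere (0 : ℂ) 1, w - b ≠ 0 := by
    intro w hw
    rw [mem_sphere_zero_iff_norm] at hw
    refine sub_ne_zero.2 fun h => ?_
    rw [← h, hw] at hb1
    exact lt_irrefl _ hb1
  have c1 : ContinuousOn (fun _ : ℂ => (1 : ℂ)) (Metric.sphere (0 : ℂ) 1) := continuousOn_const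
  have c2 : ContinuousOn (fun w : ℂ => z * w⁻¹) (Metric.sphere (0 : ℂ) 1) :=
    continuousOn_const.mul (continuousOn_id.inv₀ hs0)
  have c3 : ContinuousOn (fun w : ℂ => (w ^ 2)⁻¹) (Metric.sphere (0 : ℂ) 1) :=
    (continuousOn_id.pow 2).inv₀ fun w hw => pow_ne_zero 2 (hs0 w hw)
  have c4 : ContinuousOn (fun w : ℂ => (a - b) * (w - a)⁻¹) (Metric.sphere (0 : ℂ) 1) :=
    continuousOn_const.mul ((continuousOn_id.sub continuousOn_const).inv₀ hsa)
  have c5 : ContinuousOn (fun w : ℂ => (b - a) * (w - b)⁻¹) (Metric.sphere (0 : ℂ) 1) :=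
    continuousOn_const.mul ((continuousOn_id.sub continuousOn_const).inv₀ hsb)
  have i1 : CircleIntegrable (fun _ : ℂ => (1 : ℂ)) 0 1 := circleIntegrable_const 1 0 1
  have i2 : CircleIntegrable (fun w : ℂ => z * w⁻¹) 0 1 :=
    ContinuousOn.circleIntegrable zero_le_one c2
  have i3 : CircleIntegrable (fun w : ℂ => (w ^ 2)⁻¹) 0 1 :=
    ContinuousOn.circleIntegrable zero_le_one c3
  have i4 : CircleIntegrable (fun w : ℂ => (a - b) * (w - a)⁻¹) 0 1 :=
    ContinuousOn.circleIntegrable zero_le_one c4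
  have i5 : CircleIntegrable (fun w : ℂ => (b - a) * (w - b)⁻¹) 0 1 :=
    ContinuousOn.circleIntegrable zero_le_one c5
  have i12 : CircleIntegrable (fun w : ℂ => 1 + z * w⁻¹) 0 1 :=
    ContinuousOn.circleIntegrable zero_le_one (c1.add c2)
  have i123 : CircleIntegrable (fun w : ℂ => 1 + z * w⁻¹ + (w ^ 2)⁻¹) 0 1 :=
    ContinuousOn.circleIntegrable zero_le_one ((c1.add c2).add c3)
  have i1234 : CircleIntegrable
      (fun w : ℂ => 1 + z * w⁻¹ + (w ^ 2)⁻¹ + (a - b) * (w - a)⁻¹) 0 1 :=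
    ContinuousOn.circleIntegrable zero_le_one (((c1.add c2).add c3).add c4)
  have v1 : (∮ w in C((0 : ℂ), 1), (1 : ℂ)) = 0 := by
    have := circleIntegral.integral_sub_zpow_of_ne (by decide : (0 : ℤ) ≠ -1) (0 : ℂ) 0 1
    simpa using this
  have v2 : (∮ w in C((0 : ℂ), 1), z * w⁻¹) = z * (2 * Real.pi * I) := by
    rw [circleIntegral.integral_const_mul]
    congr 1
    have := circleIntegral.integral_sub_inv_of_mem_ball (Metric.mem_ball_self one_pos : (0:ℂ) ∈ Metric.ball (0:ℂ) 1)
    simpa using this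
  have v3 : (∮ w in C((0 : ℂ), 1), (w ^ 2)⁻¹) = 0 := by
    have h := circleIntegral.integral_sub_zpow_of_ne (by decide : (-2 : ℤ) ≠ -1) (0 : ℂ) 0 1
    refine Eq.trans ?_ h
    apply circleIntegral.integral_congr zero_le_one
    intro w _
    show (w ^ 2)⁻¹ = (w - 0) ^ (-2 : ℤ)
    rw [sub_zero, zpow_neg, zpow_two, pow_two]
  have haball : a ∈ Metric.ball (0 : ℂ) 1 := by
    rw [Metric.mem_ball, Complex.dist_eq, sub_zero]
    exact haa
  have v4 : (∮ w in C((0 : ℂ), 1), (a - b) * (w - a)⁻¹) = (a - b) * (2 * Real.pi * I) := by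
    rw [circleIntegral.integral_const_mul, circleIntegral.integral_sub_inv_of_mem_ball haball]
  have v5 : (∮ w in C((0 : ℂ), 1), (b - a) * (w - b)⁻¹) = 0 := by
    rw [circleIntegral.integral_const_mul]
    rw [circleIntegral_eq_zero_of_differentiable_on_off_countable zero_le_one
      Set.countable_empty ?hc ?hd, mul_zero]
    case hc =>
      apply ContinuousOn.inv₀ (continuousOn_id.sub continuousOn_const)
      intro w hw
      rw [Metric.mem_closedBall, Complex.dist_eq, sub_zero] at hw
      refine sub_ne_zero.2 fun h => ?_
      simp only [id_eq] at h
      rw [hb, ← h] at hb1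
      linarith
    case hd =>
      intro w hw
      apply DifferentiableAt.inv (differentiableAt_id.sub (differentiableAt_const b))
      rw [Set.diff_empty, Metric.mem_ball, Complex.dist_eq, sub_zero] at hw
      refine sub_ne_zero.2 fun h => ?_
      simp only [id_eq] at h
      rw [← h] at hb1
      linarith
  have hval : (∮ w in C((0 : ℂ), 1), g w) =
      I / 4 * (z * (2 * Real.pi * I) + (a - b) * (2 * Real.pi * I)) := by
    calc (∮ w in C((0 : ℂ), 1), g w)
        = I / 4 * ∮ w in C((0 : ℂ), 1),
            (1 + z * w⁻¹ + (w ^ 2)⁻¹ + (a - b) * (w - a)⁻¹ + (b - a) * (w - b)⁻¹) := by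
          rw [hg]
          exact circleIntegral.integral_const_mul _ _ _ _
      _ = I / 4 * (0 + z * (2 * Real.pi * I) + 0 + (a - b) * (2 * Real.pi * I) + 0) := by
          rw [circleIntegral_add' i1234 i5, circleIntegral_add' i123 i4,
            circleIntegral_add' i12 i3, circleIntegral_add' i1 i2, v1, v2, v3, v4, v5]
      _ = I / 4 * (z * (2 * Real.pi * I) + (a - b) * (2 * Real.pi * I)) := by ring
  -- Conclusion
  have hfin : (2 : ℂ) * ∫ θ in (0 : ℝ)..Real.pi, G θ =
      I / 4 * (z * (2 * Real.pi * I) + (a - b) * (2 * Real.pi * I)) := by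
    rw [← step4, step5, hval]
  have hπ : (Real.pi : ℂ) ≠ 0 := by exact_mod_cast Real.pi_ne_zero
  rw [step1, step2, intervalIntegral.integral_smul, Complex.real_smul]
  push_cast
  rw [hb] at hfin
  rw [div_mul_eq_mul_div, div_eq_iff hπ]
  linear_combination hfin + ((Real.pi : ℂ) * a) * Complex.I_sq
  
/-- the Stieltjes transform of the semicircle law satisfies the
quadratic self-consistent equation. -/
theorem mSC_self_consistent (z : ℂ) (hz : 0 < z.im) :
    mSC z ^ 2 + z * mSC z + 1 = 0 ∧ z + mSC z = -(mSC z)⁻¹ := by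
  obtain ⟨a, ha, haa⟩ := exists_root_semicircle z hz
  have hm := mSC_eq_neg_root z a hz ha haa
  have ha0 : a ≠ 0 := by
    intro h; rw [h] at ha; simp at ha
  constructor
  · rw [hm]; linear_combination ha
  · rw [hm, inv_neg, neg_neg]
    field_simp
    linear_combination -ha
end
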